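/- Let M and N be locally compact, second-countable, Hausdorff topological abelian groups, let φ : M → N be a continuous group homomorphism with finite kernel and open image, and let ν be a Haar measure on N. Then there exists a Haar measure ν′ on M such that ν′(Z) = ν(φ(Z)) for every Borel subset Z ⊆ M on which φ is injective. -/

import Mathlib

/-!
Since `ker φ` is finite, `φ` is injective on a neighbourhood `U` of `0`, hence on every translate
of `U`, and by the open mapping theorem it is an open embedding there. Countably many translates
cover `M`; summing `Z ↦ ν (φ '' (Z ∩ Vₙ))` over a disjointification `Vₙ` of this cover gives a
measure with `ν' Z = ν (φ '' Z)` whenever `φ` is injective on `Z`. Because the translates cover `M`,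
this property determines the measure, so invariance of `ν` under translation by `φ x` makes it
invariant under translation by `x`.
-/

open MeasureTheory Measure Set Topology Function
open scoped Pointwise

namespace AddMonoidHom

variable {G H : Type*} [AddGroup G] [AddGroup H] (φ : G →+ H)

theorem injOn_vadd {Z : Set G} (h : InjOn φ Z) (a : G) : InjOn φ (a +ᵥ Z) := by
  rintro _ ⟨u, hu, rfl⟩ _ ⟨v, hv, rfl⟩ huv
  simp only [vadd_eq_add, map_add] at huv
  exact congrArg (a +ᵥ ·) (h hu hv (add_left_cancel huv))

variable [TopologicalSpace G] [IsTopologicalAddGroup G]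

theorem exists_isOpen_zero_mem_injOn [T1Space G] (hker : Finite φ.ker) :
    ∃ U : Set G, IsOpen U ∧ (0 : G) ∈ U ∧ InjOn φ U := by
  have hnhds : ((φ.ker : Set G) \ {0})ᶜ ∈ 𝓝 (0 : G) :=
    (Set.toFinite _).sdiff.isClosed.isOpen_compl.mem_nhds (by simp)
  obtain ⟨V, hV, hVsub⟩ := exists_nhds_half_neg hnhds
  refine ⟨interior V, isOpen_interior, mem_interior_iff_mem_nhds.2 hV, fun a ha b hb hab => ?_⟩
  by_contra hne
  exact hVsub a (interior_subset ha) b (interior_subset hb) ⟨by simp [hab], sub_ne_zero.2 hne⟩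

theorem isOpenMap_of_isOpen_range [SigmaCompactSpace G] [TopologicalSpace H]
    [IsTopologicalAddGroup H] [LocallyCompactSpace H] [T2Space H] (hφ : Continuous φ)
    (hrange : IsOpen (Set.range φ)) : IsOpenMap φ := by
  have hr : IsOpen (φ.range : Set H) := by rwa [coe_range]
  have : LocallyCompactSpace φ.range := hr.locallyCompactSpace
  exact hr.isOpenMap_subtype_val.comp
    (φ.rangeRestrict.isOpenMap_of_sigmaCompact φ.rangeRestrict_surjective (hφ.subtype_mk _))

end AddMonoidHom

theorem exists_iUnion_vadd_eq_univ {G : Type*} [TopologicalSpace G] [AddGroup G]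
    [IsTopologicalAddGroup G] [TopologicalSpace.SeparableSpace G] {U : Set G} (hU : IsOpen U)
    (h0 : (0 : G) ∈ U) : ∃ x : ℕ → G, ⋃ n, x n +ᵥ U = univ := by
  obtain ⟨x, hx⟩ := TopologicalSpace.exists_dense_seq G
  refine ⟨x, eq_univ_of_forall fun y => ?_⟩
  have hV : IsOpen ((fun z => -z + y) ⁻¹' U) := hU.preimage (by fun_prop)
  obtain ⟨n, hn⟩ := hx.exists_mem_open hV ⟨y, by rwa [mem_preimage, neg_add_cancel]⟩
  exact mem_iUnion.2 ⟨n, -x n + y, hn, add_neg_cancel_left _ _⟩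

section InducedMeasure

variable {α β : Type*} [MeasurableSpace β]

theorem measure_image_eq_tsum_inter {φ : α → β} {ν : Measure β} {Z : Set α} (hZ : InjOn φ Z)
    {T : ℕ → Set α} (hTd : Pairwise (Disjoint on T)) (hT : ⋃ n, T n = univ)
    (hm : ∀ n, MeasurableSet (φ '' (Z ∩ T n))) : ν (φ '' Z) = ∑' n, ν (φ '' (Z ∩ T n)) := by
  conv_lhs => rw [← inter_univ Z, ← hT, inter_iUnion, image_iUnion]
  refine measure_iUnion (fun i j hij => ?_) hm
  show Disjoint _ _
  rw [disjoint_iff_inter_eq_empty, ← hZ.image_inter inter_subset_left inter_subset_left,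
    ((hTd hij).mono inter_subset_right inter_subset_right).inter_eq, image_empty]

variable [MeasurableSpace α]

def IsInducedMeasure (φ : α → β) (ν : Measure β) (μ : Measure α) : Prop :=
  ∀ Z, MeasurableSet Z → InjOn φ Z → μ Z = ν (φ '' Z)

variable {φ : α → β} {ν : Measure β} {S : ℕ → Set α}

theorem exists_isInducedMeasure (hSm : ∀ n, MeasurableSet (S n)) (hS : ⋃ n, S n = univ)
    (hSinj : ∀ n, InjOn φ (S n)) (himg : ∀ Z, MeasurableSet Z → MeasurableSet (φ '' Z))
    (ν : Measure β) : ∃ μ : Measure α, IsInducedMeasure φ ν μ := by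
  set V := disjointed S
  have hVm : ∀ n, MeasurableSet (V n) := .disjointed hSm
  have hρ : ∀ n s, MeasurableSet s →
      (ν.comap ((V n).domRestrict φ)).map (↑) s = ν (φ '' (s ∩ V n)) := by
    intro n s hs
    have himg' : ∀ t, MeasurableSet t → MeasurableSet ((V n).domRestrict φ '' t) := by
      intro t ht
      rw [domRestrict_eq, image_comp]
      exact himg _ ((hVm n).subtype_image ht)
    rw [map_apply measurable_subtype_coe hs,
      comap_apply _ ((hSinj n).mono (disjointed_subset S n)).injective himg' ν
        (measurable_subtype_coe hs), image_domRestrict]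
  refine ⟨Measure.sum fun n => (ν.comap ((V n).domRestrict φ)).map (↑), fun Z hZ hinj => ?_⟩
  rw [sum_apply _ hZ, measure_image_eq_tsum_inter hinj (disjoint_disjointed S)
    (by rw [iUnion_disjointed, hS]) (fun n => himg _ (hZ.inter (hVm n)))]
  exact tsum_congr fun n => hρ n Z hZ

theorem IsInducedMeasure.ext {μ₁ μ₂ : Measure α} (h₁ : IsInducedMeasure φ ν μ₁)
    (h₂ : IsInducedMeasure φ ν μ₂) (hSm : ∀ n, MeasurableSet (S n)) (hS : ⋃ n, S n = univ)
    (hSinj : ∀ n, InjOn φ (S n)) : μ₁ = μ₂ := by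
  refine (ext_iff_of_iUnion_eq_univ hS).2 fun n => Measure.ext fun t ht => ?_
  have hinj : InjOn φ (t ∩ S n) := (hSinj n).mono inter_subset_right
  rw [restrict_apply ht, restrict_apply ht, h₁ _ (ht.inter (hSm n)) hinj,
    h₂ _ (ht.inter (hSm n)) hinj]

variable [TopologicalSpace α] [TopologicalSpace β]

theorem measurableSet_image_of_isOpenMap [BorelSpace α] [BorelSpace β] (hφ : Continuous φ)
    (hφo : IsOpenMap φ) (hSo : ∀ n, IsOpen (S n)) (hS : ⋃ n, S n = univ)
    (hSinj : ∀ n, InjOn φ (S n)) {Z : Set α} (hZ : MeasurableSet Z) :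
    MeasurableSet (φ '' Z) := by
  rw [← inter_univ Z, ← hS, inter_iUnion, image_iUnion]
  refine .iUnion fun n => ?_
  have hemb : MeasurableEmbedding ((S n).domRestrict φ) :=
    (IsOpenEmbedding.of_continuous_injective_isOpenMap (hφ.comp continuous_subtype_val)
      (hSinj n).injective (hφo.domRestrict (hSo n))).measurableEmbedding
  rw [← image_domRestrict]
  exact hemb.measurableSet_image' (measurable_subtype_coe hZ)

variable [OpensMeasurableSpace α] {μ : Measure α}

theorem IsInducedMeasure.isFiniteMeasureOnCompacts [T2Space α] [IsFiniteMeasureOnCompacts ν]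
    (hμ : IsInducedMeasure φ ν μ) (hφ : Continuous φ) (hSo : ∀ n, IsOpen (S n))
    (hS : ⋃ n, S n = univ) (hSinj : ∀ n, InjOn φ (S n)) : IsFiniteMeasureOnCompacts μ := by
  refine ⟨fun K hK => ?_⟩
  obtain ⟨t, ht⟩ := hK.elim_finite_subcover S hSo (hS ▸ subset_univ K)
  calc μ K ≤ μ (⋃ n ∈ t, K ∩ S n) := measure_mono fun y hy => by
        obtain ⟨n, hn, hyn⟩ := mem_iUnion₂.1 (ht hy)
        exact mem_iUnion₂.2 ⟨n, hn, hy, hyn⟩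
    _ ≤ ∑ n ∈ t, μ (K ∩ S n) := measure_biUnion_finset_le t _
    _ ≤ ∑ _n ∈ t, ν (φ '' K) := Finset.sum_le_sum fun n _ => by
        rw [hμ _ (hK.measurableSet.inter (hSo n).measurableSet)
          ((hSinj n).mono inter_subset_right)]
        exact measure_mono (image_mono inter_subset_left)
    _ < ⊤ := ENNReal.sum_lt_top.2 fun _ _ => (hK.image hφ).measure_lt_top

theorem IsInducedMeasure.isOpenPosMeasure [ν.IsOpenPosMeasure] (hμ : IsInducedMeasure φ ν μ)
    (hφo : IsOpenMap φ) (hSo : ∀ n, IsOpen (S n)) (hS : ⋃ n, S n = univ)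
    (hSinj : ∀ n, InjOn φ (S n)) : μ.IsOpenPosMeasure := by
  refine ⟨fun G hG ⟨y, hy⟩ => ?_⟩
  obtain ⟨n, hyn⟩ := mem_iUnion.1 (hS.superset (mem_univ y))
  have hGn : IsOpen (G ∩ S n) := hG.inter (hSo n)
  refine ne_bot_of_le_ne_bot ?_ (measure_mono (μ := μ) (inter_subset_left (t := S n)))
  rw [hμ _ hGn.measurableSet ((hSinj n).mono inter_subset_right)]
  exact (hφo _ hGn).measure_ne_zero ν ⟨φ y, y, ⟨hy, hyn⟩, rfl⟩

end InducedMeasure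

section Invariance

variable {M N : Type*} [AddGroup M] [AddGroup N] [MeasurableSpace M] [MeasurableSpace N]
  [MeasurableAdd M] {φ : M →+ N} {ν : Measure N} [ν.IsAddLeftInvariant]
  {μ : Measure M}

theorem IsInducedMeasure.map_add_left (hμ : IsInducedMeasure φ ν μ) (x : M) :
    IsInducedMeasure φ ν (μ.map (x + ·)) := by
  intro Z hZ hinj
  rw [map_apply (measurable_const_add x) hZ]
  show μ ((x +ᵥ ·) ⁻¹' Z) = _
  rw [preimage_vadd, hμ _ (hZ.const_vadd _) (φ.injOn_vadd hinj _), image_vadd_distrib,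
    measure_vadd]

theorem IsInducedMeasure.isAddLeftInvariant (hμ : IsInducedMeasure φ ν μ) {S : ℕ → Set M}
    (hSm : ∀ n, MeasurableSet (S n)) (hS : ⋃ n, S n = univ) (hSinj : ∀ n, InjOn φ (S n)) :
    μ.IsAddLeftInvariant :=
  ⟨fun x => (hμ.map_add_left x).ext hμ hSm hS hSinj⟩

end Invariance

theorem exists_induced_addHaarMeasure_general
    {M N : Type*}
    [TopologicalSpace M] [AddCommGroup M] [IsTopologicalAddGroup M]
    [LocallyCompactSpace M] [SecondCountableTopology M] [T2Space M]
    [MeasurableSpace M] [BorelSpace M]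
    [TopologicalSpace N] [AddCommGroup N] [IsTopologicalAddGroup N]
    [LocallyCompactSpace N] [T2Space N]
    [MeasurableSpace N] [BorelSpace N]
    (φ : M →+ N) (hcont : Continuous φ) (hker : Finite φ.ker)
    (hopen : IsOpen (Set.range φ))
    (ν : Measure N) [ν.IsAddHaarMeasure] :
    ∃ ν' : Measure M, ν'.IsAddHaarMeasure ∧
      ∀ Z : Set M, MeasurableSet Z → Set.InjOn φ Z → ν' Z = ν (φ '' Z) := by
  obtain ⟨U, hUo, hU0, hUinj⟩ := φ.exists_isOpen_zero_mem_injOn hker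
  obtain ⟨x, hS⟩ := exists_iUnion_vadd_eq_univ hUo hU0
  have hSo : ∀ n, IsOpen (x n +ᵥ U) := fun n => hUo.vadd (x n)
  have hSm : ∀ n, MeasurableSet (x n +ᵥ U) := fun n => (hSo n).measurableSet
  have hSinj : ∀ n, InjOn φ (x n +ᵥ U) := fun n => φ.injOn_vadd hUinj (x n)
  have hφo : IsOpenMap φ := φ.isOpenMap_of_isOpen_range hcont hopen
  obtain ⟨μ, hμ⟩ := exists_isInducedMeasure hSm hS hSinj
    (fun Z hZ => measurableSet_image_of_isOpenMap hcont hφo hSo hS hSinj hZ) ν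
  have := hμ.isAddLeftInvariant hSm hS hSinj
  have := hμ.isFiniteMeasureOnCompacts hcont hSo hS hSinj
  have := hμ.isOpenPosMeasure hφo hSo hS hSinj
  exact ⟨μ, ⟨⟩, hμ⟩

/-- Let `M`, `N` be locally compact, second-countable, Hausdorff topological abelian
groups, `φ : M →+ N` a continuous homomorphism with finite kernel and open image, and
`ν` a Haar measure on `N`.  Then there is a Haar measure `ν'` on `M` (the "induced
measure") such that `ν' Z = ν (φ '' Z)` for every Borel set `Z ⊆ M` on which `φ` is
injective. -/
theorem exists_induced_addHaarMeasure
    {M N : Type*}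
    [TopologicalSpace M] [AddCommGroup M] [IsTopologicalAddGroup M]
    [LocallyCompactSpace M] [SecondCountableTopology M] [T2Space M]
    [MeasurableSpace M] [BorelSpace M]
    [TopologicalSpace N] [AddCommGroup N] [IsTopologicalAddGroup N]
    [LocallyCompactSpace N] [SecondCountableTopology N] [T2Space N]
    [MeasurableSpace N] [BorelSpace N]
    (φ : M →+ N) (hcont : Continuous φ) (hker : Finite φ.ker)
    (hopen : IsOpen (Set.range φ))
    (ν : Measure N) [ν.IsAddHaarMeasure] :
    ∃ ν' : Measure M, ν'.IsAddHaarMeasure ∧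
      ∀ Z : Set M, MeasurableSet Z → Set.InjOn φ Z → ν' Z = ν (φ '' Z) :=
  exists_induced_addHaarMeasure_general φ hcont hker hopen ν
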